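/- arXiv:2503.08566 — 2 statements merged into one kernel-verified Lean document; each statement's English description precedes it below -/
import Mathlib

section
/- Let G be a cyclic group of prime order p acting on a nonempty set A, let g be a generator of G, and let (x,y) ∈ A × A. Set r = {(gⁿ•x, gⁿ•y) : n = 0,1,…,p−1}, the orbit of (x,y) under the diagonal action. Then either r is the graph of a partial function on A (no two pairs in r share a first coordinate with different second coordinates), or the converse relation r⁻¹ is the graph of a partial function on A. -/
/-- A binary relation `R` on a `G`-set `A` is compatible if it is closed
under the diagonal action of `G`. -/
def IsCompatibleRel (G : Type*) {A : Type*} [Group G] [MulAction G A]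
    (R : Set (A × A)) : Prop :=
  ∀ p ∈ R, ∀ g : G, (g • p.1, g • p.2) ∈ R

/-- Relational composition of binary relations on `A`. -/
def relComp {A : Type*} (R S : Set (A × A)) : Set (A × A) :=
  {p | ∃ y, (p.1, y) ∈ R ∧ (y, p.2) ∈ S}

/-- Converse of a binary relation. -/
def relConv {A : Type*} (R : Set (A × A)) : Set (A × A) :=
  {p | (p.2, p.1) ∈ R}

/-- A binary relation is (the graph of) a partial function. -/
def IsPartialFun {A : Type*} (R : Set (A × A)) : Prop :=
  ∀ a b c : A, (a, b) ∈ R → (a, c) ∈ R → b = c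

/-!
Two points of the diagonal orbit of `(x, y)` with equal first coordinates differ by an element
of the stabilizer of `x`; if that lies in the stabilizer of `y`, their second coordinates agree
too. In a group of prime order every subgroup is `⊥` or `⊤`, so the stabilizers of `x` and `y`
are comparable, and the orbit or its converse is a partial function.
-/

theorem IsPartialFun.mono {A : Type*} {R S : Set (A × A)} (hRS : R ⊆ S) (hS : IsPartialFun S) :
    IsPartialFun R :=
  fun a b c hab hac => hS a b c (hRS hab) (hRS hac)

theorem isPartialFun_range_smul_of_stabilizer_le {G A : Type*} [Group G] [MulAction G A]
    {x y : A} (hxy : MulAction.stabilizer G x ≤ MulAction.stabilizer G y) :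
    IsPartialFun (Set.range fun h : G => (h • x, h • y)) := by
  rintro a b c ⟨h, hab⟩ ⟨k, hac⟩
  simp only [Prod.mk.injEq] at hab hac
  obtain ⟨rfl, rfl⟩ := hab
  obtain ⟨hkx, rfl⟩ := hac
  have hstab : k⁻¹ * h ∈ MulAction.stabilizer G x := by
    rw [MulAction.mem_stabilizer_iff, mul_smul, ← hkx, inv_smul_smul]
  have hy := hxy hstab
  rwa [MulAction.mem_stabilizer_iff, mul_smul, inv_smul_eq_iff] at hy

theorem Subgroup.le_total_of_prime_card {G : Type*} [Group G] (hp : (Nat.card G).Prime)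
    (H K : Subgroup G) : H ≤ K ∨ K ≤ H := by
  have : Fact (Nat.card G).Prime := ⟨hp⟩
  rcases H.eq_bot_or_eq_top_of_prime_card with rfl | rfl
  · exact Or.inl bot_le
  · exact Or.inr le_top

theorem orbit_or_converse_function_general (G A : Type*) [Group G] [MulAction G A]
    (p : ℕ) (hp : p.Prime) [Fintype G] (hcard : Fintype.card G = p)
    (g : G) (x y : A)
    (r : Set (A × A)) (hr : r = {q | ∃ n : ℕ, n < p ∧ q = (g ^ n • x, g ^ n • y)}) :
    IsPartialFun r ∨ IsPartialFun (relConv r) := by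
  have hr_sub : r ⊆ Set.range fun h : G => (h • x, h • y) := by
    intro q hq
    obtain ⟨n, -, rfl⟩ := hr ▸ hq
    exact ⟨g ^ n, rfl⟩
  have hconv_sub : relConv r ⊆ Set.range fun h : G => (h • y, h • x) := by
    rintro ⟨a, b⟩ hq
    obtain ⟨h, hh⟩ := hr_sub hq
    simp only [Prod.mk.injEq] at hh
    exact ⟨h, by rw [← hh.1, ← hh.2]⟩
  rw [← Nat.card_eq_fintype_card] at hcard
  rcases Subgroup.le_total_of_prime_card (hcard ▸ hp)
    (MulAction.stabilizer G x) (MulAction.stabilizer G y) with hxy | hyx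
  · exact Or.inl ((isPartialFun_range_smul_of_stabilizer_le hxy).mono hr_sub)
  · exact Or.inr ((isPartialFun_range_smul_of_stabilizer_le hyx).mono hconv_sub)

theorem orbit_or_converse_function (G A : Type*) [Group G] [MulAction G A] [Nonempty A]
    (p : ℕ) (hp : p.Prime) [Fintype G] (hcard : Fintype.card G = p)
    (g : G) (hg : ∀ h : G, ∃ n : ℕ, g ^ n = h) (x y : A)
    (r : Set (A × A)) (hr : r = {q | ∃ n : ℕ, n < p ∧ q = (g ^ n • x, g ^ n • y)}) :
    IsPartialFun r ∨ IsPartialFun (relConv r) :=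
  orbit_or_converse_function_general G A p hp hcard g x y r hr
end

section
/- Let σ be an involution on a set U and consider the Z₂-action on U induced by σ. Then for every atom r of the algebra of compatible relations (i.e., every orbit of a pair under the diagonal action), either r or its converse r⁻¹ is the graph of a partial function on U. -/
theorem isPartialFun_pair {A : Type*} {a b c d : A} (h : a = c → b = d) :
    IsPartialFun ({(a, b), (c, d)} : Set (A × A)) := by
  intro u v w huv huw
  simp only [Set.mem_insert_iff, Set.mem_singleton_iff, Prod.mk.injEq] at huv huw
  rcases huv with ⟨rfl, rfl⟩ | ⟨rfl, rfl⟩ <;> rcases huw with ⟨hu, rfl⟩ | ⟨hu, rfl⟩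
  · rfl
  · exact h hu
  · exact (h hu.symm).symm
  · rfl

theorem relConv_pair {A : Type*} (a b c d : A) :
    relConv ({(a, b), (c, d)} : Set (A × A)) = {(b, a), (d, c)} := by
  ext ⟨u, v⟩
  simp [relConv, and_comm]

theorem z2_atoms_almost_functions_general (U : Type*) (σ : U → U)
    (x y : U) :
    IsPartialFun ({(x, y), (σ x, σ y)} : Set (U × U)) ∨
    IsPartialFun (relConv ({(x, y), (σ x, σ y)} : Set (U × U))) := by
  rw [relConv_pair]
  by_cases hx : x = σ x
  · exact Or.inr (isPartialFun_pair fun _ => hx)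
  · exact Or.inl (isPartialFun_pair fun h => absurd h hx)

theorem z2_atoms_almost_functions (U : Type*) (σ : U → U)
    (hσ : Function.Involutive σ) (x y : U) :
    IsPartialFun ({(x, y), (σ x, σ y)} : Set (U × U)) ∨
    IsPartialFun (relConv ({(x, y), (σ x, σ y)} : Set (U × U))) :=
  z2_atoms_almost_functions_general U σ x y
end
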